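/- arXiv:2003.14057 — 2 statements merged into one kernel-verified Lean document; each statement's English description precedes it below -/
import Mathlib

section
/- Let M = r^a with r prime and a ≥ 1, let q be a prime power with gcd(q, M) = 1, and let f ∈ F_q[X] be a monic irreducible polynomial of degree d with f ≠ X. Let 𝔪(r;q) denote the multiplicative order of q modulo r. If 𝔪(r;q) does not divide d, then f is an M-power polynomial. -/
open Polynomial IntermediateField

/-!
Put `K = F[X]/(f)`, a field with `q ^ d` elements generated by the root `α` of `f`. As the order of
`q` modulo `r` does not divide `d`, `r ∤ q ^ d - 1 = |Kˣ|`; hence the `M`-th power map is a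
bijection of `Kˣ` and `α = β ^ M` for some `β ∈ K`. Then `F⟮β⟯ ⊇ F⟮α⟯ = K`, so the minimal
polynomial of `β` is an irreducible factor of `f(X ^ M)` of degree `[K : F] = d`.
-/

theorem Nat.not_dvd_pow_sub_one_of_not_orderOf_dvd {n q d : ℕ} (hq : q ≠ 0)
    (h : ¬orderOf (q : ZMod n) ∣ d) : ¬n ∣ q ^ d - 1 := by
  rw [orderOf_dvd_iff_pow_eq_one] at h
  intro hdvd
  rw [← ZMod.natCast_eq_zero_iff, Nat.cast_sub (Nat.one_le_pow _ _ (Nat.pos_of_ne_zero hq)),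
    sub_eq_zero, Nat.cast_pow, Nat.cast_one] at hdvd
  exact h hdvd

theorem exists_pow_eq_of_coprime_card_sub_one {G₀ : Type*} [GroupWithZero G₀] {n : ℕ}
    (hn : (Nat.card G₀ - 1).Coprime n) {x : G₀} (hx : x ≠ 0) : ∃ y : G₀, y ^ n = x := by
  rw [← Nat.card_units] at hn
  obtain ⟨u, hu⟩ := hn.pow_left_bijective.surjective (Units.mk0 x hx)
  exact ⟨u, by simpa using congrArg Units.val hu⟩

theorem IntermediateField.adjoin_simple_eq_top_of_pow {F K : Type*} [Field F] [Field K]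
    [Algebra F K] {β : K} (n : ℕ) (h : F⟮β ^ n⟯ = ⊤) : F⟮β⟯ = ⊤ :=
  top_unique <| h ▸ adjoin_simple_le_iff.mpr (pow_mem (mem_adjoin_simple_self F β) n)

theorem minpoly_dvd_comp_X_pow {F K : Type*} [Field F] [CommRing K] [Algebra F K] {β : K}
    {f : F[X]} {n : ℕ} (hf : aeval (β ^ n) f = 0) : minpoly F β ∣ f.comp (X ^ n) :=
  minpoly.dvd F β (by rwa [aeval_comp, map_pow, aeval_X])

theorem AdjoinRoot.root_ne_zero {F : Type*} [Field F] {f : F[X]} (hirr : Irreducible f)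
    (hX : ¬X ∣ f) : root f ≠ 0 := by
  intro h
  rw [← mk_X, mk_eq_zero] at h
  exact hX (hirr.dvd_symm irreducible_X h)

theorem exists_irreducible_dvd_comp_X_pow_of_coprime {F : Type*} [Field F] [Finite F]
    {f : F[X]} (hirr : Irreducible f) (hX : ¬X ∣ f) {n : ℕ}
    (hn : (Nat.card F ^ f.natDegree - 1).Coprime n) :
    ∃ g : F[X], Irreducible g ∧ g ∣ f.comp (X ^ n) ∧ g.natDegree = f.natDegree := by
  have : Fact (Irreducible f) := ⟨hirr⟩
  let K := AdjoinRoot f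
  have hrank : Module.finrank F K = f.natDegree :=
    (AdjoinRoot.powerBasis hirr.ne_zero).finrank.trans (AdjoinRoot.powerBasis_dim _)
  have : Module.Finite F K := (AdjoinRoot.powerBasis hirr.ne_zero).finite
  have : Finite K := Module.finite_of_finite F
  obtain ⟨β, hβ⟩ := exists_pow_eq_of_coprime_card_sub_one
    (by rwa [Module.natCard_eq_pow_finrank (K := F), hrank]) (AdjoinRoot.root_ne_zero hirr hX)
  have hgen : F⟮β⟯ = ⊤ := adjoin_simple_eq_top_of_pow n (hβ ▸ adjoin_root_eq_top f)
  refine ⟨minpoly F β, minpoly.irreducible (.of_finite F β), minpoly_dvd_comp_X_pow ?_, ?_⟩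
  · rw [hβ, AdjoinRoot.aeval_eq, AdjoinRoot.mk_self]
  · exact ((Field.primitive_element_iff_minpoly_natDegree_eq F β).mp hgen).trans hrank

theorem statement2_general (F : Type*) [Field F] [Fintype F] (r a M : ℕ) (hr : r.Prime)
    (hMra : M = r ^ a)
    (f : F[X]) (hmon : f.Monic) (hirr : Irreducible f) (hfX : f ≠ X)
    (d : ℕ) (hdeg : f.natDegree = d)
    (hord : ¬ orderOf ((Fintype.card F : ZMod r)) ∣ d) :
    ∃ g : F[X], Irreducible g ∧ g ∣ f.comp (X ^ M) ∧ g.natDegree = d := by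
  have hX : ¬X ∣ f := fun h ↦
    hfX (eq_of_monic_of_associated monic_X hmon (irreducible_X.associated_of_dvd hirr h)).symm
  have hcop : (Nat.card F ^ f.natDegree - 1).Coprime M := by
    rw [Nat.card_eq_fintype_card, hdeg, hMra]
    refine Nat.Coprime.pow_right _ (hr.coprime_iff_not_dvd.mpr ?_).symm
    exact Nat.not_dvd_pow_sub_one_of_not_orderOf_dvd Fintype.card_ne_zero hord
  exact hdeg ▸ exists_irreducible_dvd_comp_X_pow_of_coprime hirr hX hcop

/-- Let `M = r^a` with `r` prime, `gcd(q,M) = 1`, and let `f` be monic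
irreducible of degree `d` with `f ≠ X`. If the multiplicative order of `q` modulo `r`
does not divide `d`, then `f` is an M-power polynomial, i.e. `f(X^M)` has an irreducible
factor of degree `d`. -/
theorem statement2 (F : Type*) [Field F] [Fintype F] (r a M : ℕ) (hr : r.Prime) (ha : 1 ≤ a)
    (hMra : M = r ^ a) (hcop : Nat.Coprime (Fintype.card F) M)
    (f : F[X]) (hmon : f.Monic) (hirr : Irreducible f) (hfX : f ≠ X)
    (d : ℕ) (hdeg : f.natDegree = d)
    (hord : ¬ orderOf ((Fintype.card F : ZMod r)) ∣ d) :
    ∃ g : F[X], Irreducible g ∧ g ∣ f.comp (X ^ M) ∧ g.natDegree = d :=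
  statement2_general F r a M hr hMra f hmon hirr hfX d hdeg hord
end

section
/- Let M ≥ 2 with gcd(q, M) = 1 and let α ∈ GL(n, F_q) be a regular element, i.e., the minimal polynomial of α equals its characteristic polynomial. Then X^M = α has a solution in GL(n, F_q) if and only if every monic irreducible factor of the characteristic polynomial of α is an M-power polynomial. -/
/-!
A regular matrix `A` has a cyclic vector, so every matrix commuting with `A` is a polynomial in
`A`. Hence `X ^ M = A` is solvable iff `charpoly A ∣ p ^ M - X` for some polynomial `p`, i.e. iff
`X` is an `M`-th power modulo `charpoly A` (conversely `B = p(A)` works by Cayley–Hamilton).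
For irreducible `g`, `X` is an `M`-th power modulo `g` iff `g` is `M`-power: an `M`-th root `μ`
of the root of `g` generates `F[X]/(g)`, so its minimal polynomial is a factor of `g(X ^ M)` of
degree `deg g`, and conversely. Since `M` is invertible in `F` and `X ∤ charpoly A`, an `M`-th
root of `X` modulo `g` is a simple root of `Y ^ M - X`, so it lifts modulo every power of `g` by
Newton's method, and these lifts combine by the Chinese remainder theorem.
-/

open Polynomial Module IntermediateField

theorem FiniteField.natCast_ne_zero_of_coprime_card {F : Type*} [Field F] [Fintype F] {M : ℕ}
    (h : Nat.Coprime (Fintype.card F) M) : (M : F) ≠ 0 := by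
  intro h0
  have := Nat.dvd_gcd (ringChar.dvd (FiniteField.cast_card_eq_zero F)) (ringChar.dvd h0)
  rw [h, Nat.dvd_one] at this
  exact CharP.ringChar_ne_one this

theorem Units.exists_pow_eq_of_pow_eq_val {G : Type*} [Monoid G] {a : Gˣ} {b : G} {M : ℕ}
    (hM : M ≠ 0) (h : b ^ M = a) : ∃ c : Gˣ, c ^ M = a := by
  have hb : IsUnit b := (isUnit_pow_iff hM).mp (h ▸ a.isUnit)
  exact ⟨hb.unit, Units.ext (by rw [Units.val_pow_eq_pow_val, IsUnit.unit_spec, h])⟩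

theorem AdjoinRoot.finrank_eq_natDegree {F : Type*} [Field F] {g : F[X]} :
    finrank F (AdjoinRoot g) = g.natDegree :=
  finrank_quotient_span_eq_natDegree

namespace Polynomial

variable {R : Type*} [CommRing R]

theorem exists_pow_dvd_eval_of_dvd_eval {P : R[X]} {g a : R} (hroot : g ∣ P.eval a)
    (hder : IsCoprime g (P.derivative.eval a)) (e : ℕ) : ∃ b, g ^ e ∣ P.eval b := by
  suffices ∀ e, ∃ b, g ^ (e + 1) ∣ P.eval b ∧ g ∣ b - a by
    obtain ⟨b, hb, -⟩ := this e
    exact ⟨b, (pow_dvd_pow g e.le_succ).trans hb⟩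
  intro e
  induction e with
  | zero => exact ⟨a, by simpa using hroot, by simp⟩
  | succ e ih =>
    obtain ⟨b, ⟨r, hr⟩, hba⟩ := ih
    obtain ⟨k, hk⟩ := hba.trans (sub_dvd_eval_sub b a P.derivative)
    obtain ⟨u, v, huv⟩ : IsCoprime g (P.derivative.eval b) := by
      simpa [sub_eq_iff_eq_add.mp hk] using hder.add_mul_left_right k
    -- Newton step: the correction `-(v r) g ^ (e + 1)` kills `P b` modulo `g ^ (e + 2)`
    obtain ⟨c, hc⟩ := binomExpansion P b (-(v * r) * g ^ (e + 1))
    refine ⟨b + -(v * r) * g ^ (e + 1), ⟨r * u + c * v ^ 2 * r ^ 2 * g ^ e, ?_⟩, ?_⟩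
    · rw [hc, hr]
      linear_combination (-(g ^ (e + 1) * r)) * huv
    · rw [add_sub_right_comm]
      exact dvd_add hba (Dvd.intro (-(v * r) * g ^ e) (by ring))

theorem exists_mul_dvd_eval_of_isCoprime (P : R[X]) {a b x y : R} (hab : IsCoprime a b)
    (hx : a ∣ P.eval x) (hy : b ∣ P.eval y) : ∃ z, a * b ∣ P.eval z := by
  have ⟨u, v, huv⟩ := hab
  set z := v * b * x + u * a * y
  have hzx : a ∣ P.eval z - P.eval x :=
    (Dvd.intro (u * (y - x)) (by linear_combination (-x) * huv)).trans (sub_dvd_eval_sub z x P)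
  have hzy : b ∣ P.eval z - P.eval y :=
    (Dvd.intro (v * (x - y)) (by linear_combination (-y) * huv)).trans (sub_dvd_eval_sub z y P)
  exact ⟨z, hab.mul_dvd (by simpa using dvd_add hzx hx) (by simpa using dvd_add hzy hy)⟩

variable [IsDomain R] [IsPrincipalIdealRing R] in
theorem exists_dvd_eval_of_forall_prime_dvd (P : R[X]) {f : R} (hf : f ≠ 0)
    (h : ∀ g, Prime g → g ∣ f → ∃ a, g ∣ P.eval a ∧ IsCoprime g (P.derivative.eval a)) :
    ∃ b, f ∣ P.eval b := by
  suffices ∀ d, d ∣ f → ∃ b, d ∣ P.eval b from this f dvd_rfl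
  intro d
  induction d using UniqueFactorizationMonoid.induction_on_coprime with
  | h0 => exact fun h0 => absurd (zero_dvd_iff.mp h0) hf
  | h1 hu => exact fun _ => ⟨0, hu.dvd⟩
  | hpr i hp =>
    cases i with
    | zero => exact fun _ => ⟨0, by simp⟩
    | succ i =>
      intro hdvd
      obtain ⟨a, hroot, hder⟩ := h _ hp ((dvd_pow_self _ i.succ_ne_zero).trans hdvd)
      exact exists_pow_dvd_eval_of_dvd_eval hroot hder (i + 1)
  | hcp hrel hx hy =>
    intro hdvd
    obtain ⟨x, hx⟩ := hx (dvd_of_mul_right_dvd hdvd)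
    obtain ⟨y, hy⟩ := hy (dvd_of_mul_left_dvd hdvd)
    exact exists_mul_dvd_eval_of_isCoprime P hrel.isCoprime hx hy

variable {F : Type*} [Field F]

theorem exists_dvd_pow_sub_X_of_irreducible_dvd_comp {g h : F[X]} {M : ℕ} (hg : Irreducible g)
    (hh : Irreducible h) (hhg : h ∣ g.comp (X ^ M)) (hdeg : h.natDegree = g.natDegree) :
    ∃ p : F[X], g ∣ p ^ M - X := by
  have := Fact.mk hg
  have := Fact.mk hh
  have := (AdjoinRoot.powerBasis hg.ne_zero).finite
  have := (AdjoinRoot.powerBasis hh.ne_zero).finite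
  have hroot : aeval (AdjoinRoot.root h ^ M) g = 0 := by
    have := AdjoinRoot.mk_eq_zero.mpr hhg
    rwa [← AdjoinRoot.aeval_eq, aeval_comp, map_pow, aeval_X] at this
  -- `root g ↦ (root h) ^ M` is an injective map of fields of the same degree over `F`
  let φ := AdjoinRoot.liftAlgHom g (Algebra.ofId F _) _ hroot
  have hφ : Function.Bijective φ := by
    refine ⟨φ.toRingHom.injective, ?_⟩
    exact (LinearMap.injective_iff_surjective_of_finrank_eq_finrank (f := φ.toLinearMap)
      (by rw [AdjoinRoot.finrank_eq_natDegree, AdjoinRoot.finrank_eq_natDegree, hdeg])).mp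
      φ.toRingHom.injective
  obtain ⟨μ, hμ⟩ := hφ.2 (AdjoinRoot.root h)
  obtain ⟨p, rfl⟩ := AdjoinRoot.mk_surjective μ
  refine ⟨p, AdjoinRoot.mk_eq_zero.mp ?_⟩
  rw [map_sub, map_pow, AdjoinRoot.mk_X, sub_eq_zero]
  exact hφ.1 (by rw [map_pow, hμ]; exact (AdjoinRoot.liftAlgHom_root _ _ _ _).symm)

theorem exists_irreducible_dvd_comp_of_dvd_pow_sub_X {g p : F[X]} {M : ℕ} (hg : Irreducible g)
    (hp : g ∣ p ^ M - X) :
    ∃ h : F[X], Irreducible h ∧ h ∣ g.comp (X ^ M) ∧ h.natDegree = g.natDegree := by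
  have := Fact.mk hg
  have := (AdjoinRoot.powerBasis hg.ne_zero).finite
  set μ := AdjoinRoot.mk g p
  have hμ : μ ^ M = AdjoinRoot.root g := by
    rw [← map_pow, ← AdjoinRoot.mk_X, ← sub_eq_zero, ← map_sub, AdjoinRoot.mk_eq_zero]
    exact hp
  have hint : IsIntegral F μ := .of_finite F μ
  have htop : F⟮μ⟯ = ⊤ := by
    rw [eq_top_iff, ← IntermediateField.adjoin_root_eq_top g, IntermediateField.adjoin_le_iff,
      Set.singleton_subset_iff, ← hμ]
    exact pow_mem (IntermediateField.mem_adjoin_simple_self F μ) M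
  refine ⟨minpoly F μ, minpoly.irreducible hint, minpoly.dvd F μ ?_, ?_⟩
  · rw [aeval_comp, map_pow, aeval_X, hμ, AdjoinRoot.aeval_eq, AdjoinRoot.mk_self]
  · rw [← IntermediateField.adjoin.finrank hint, htop, IntermediateField.finrank_top',
      AdjoinRoot.finrank_eq_natDegree]

theorem exists_dvd_pow_sub_X {M : ℕ} (hM : (M : F) ≠ 0) {f : F[X]} (hf : f ≠ 0)
    (hfX : IsCoprime X f) (h : ∀ g : F[X], g.Monic → Irreducible g → g ∣ f → ∃ p, g ∣ p ^ M - X) :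
    ∃ p, f ∣ p ^ M - X := by
  classical
  have hM0 : M ≠ 0 := by rintro rfl; simp at hM
  have heval : ∀ p : F[X], (X ^ M - C X : F[X][X]).eval p = p ^ M - X := fun p => by simp
  obtain ⟨p, hp⟩ := exists_dvd_eval_of_forall_prime_dvd (X ^ M - C X) hf fun g hg hgf => by
    have hng := associated_normalize g
    obtain ⟨p, hp⟩ := h (normalize g) (monic_normalize hg.ne_zero) (hng.irreducible hg.irreducible)
      (hng.symm.dvd.trans hgf)
    replace hp := hng.dvd.trans hp
    -- `g ∤ p`, as otherwise `g ∣ X`; so the root `p` of `Y ^ M - X` is simple modulo `g`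
    have hgp : ¬ g ∣ p := fun hgp => hg.not_isUnit <| hfX.isUnit_of_dvd'
      (by simpa using dvd_sub (dvd_pow hgp hM0) hp) hgf
    refine ⟨p, heval p ▸ hp, ?_⟩
    simp only [derivative_sub, derivative_X_pow, derivative_C, sub_zero, eval_mul, eval_C,
      eval_pow, eval_X]
    rw [isCoprime_mul_unit_left_right (by rw [← C_eq_natCast]; exact isUnit_C.mpr hM.isUnit)]
    exact ((hg.irreducible.coprime_iff_not_dvd).mpr hgp).pow_right
  exact ⟨p, heval p ▸ hp⟩

end Polynomial

namespace Module.End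

variable {F V : Type*} [Field F] [AddCommGroup V] [Module F V] [FiniteDimensional F V]

theorem exists_forall_aeval_apply_eq_zero_iff (f : End F V) :
    ∃ v : V, ∀ p : F[X], aeval f p v = 0 ↔ minpoly F f ∣ p := by
  obtain ⟨x, hx⟩ := Module.exists_ker_toSpanSingleton_eq_annihilator F[X] (AEval' f)
  rw [← span_minpoly_eq_annihilator] at hx
  refine ⟨(AEval'.of f).symm x, fun p => ?_⟩
  rw [← Ideal.mem_span_singleton, ← hx, LinearMap.mem_ker, LinearMap.toSpanSingleton_apply,
    ← (AEval'.of f).symm.map_eq_zero_iff, AEval.of_symm_smul, End.smul_def]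

theorem exists_eq_aeval_of_commute {f g : End F V}
    (hf : (minpoly F f).natDegree = finrank F V) (hfg : Commute f g) :
    ∃ q : F[X], g = aeval f q := by
  obtain ⟨v, hv⟩ := exists_forall_aeval_apply_eq_zero_iff f
  -- `p ↦ p(f) v` is injective, hence bijective, on polynomials of degree `< deg (minpoly f)`
  let ψ : degreeLT F (finrank F V) →ₗ[F] V :=
    LinearMap.applyₗ v ∘ₗ (aeval f).toLinearMap ∘ₗ (degreeLT F _).subtype
  have hψ : Function.Injective ψ := by
    refine (injective_iff_map_eq_zero ψ).mpr ?_
    rintro ⟨p, hp⟩ hψp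
    refine Subtype.ext <| eq_zero_of_dvd_of_degree_lt ((hv p).mp hψp) ?_
    rw [degree_eq_natDegree (minpoly.ne_zero (Algebra.IsIntegral.isIntegral f)), hf]
    exact mem_degreeLT.mp hp
  have hsurj : ∀ w, ∃ p : F[X], aeval f p v = w := fun w => by
    obtain ⟨⟨p, _⟩, hp⟩ := (LinearMap.injective_iff_surjective_of_finrank_eq_finrank
      (by simp [(degreeLTEquiv F _).finrank_eq])).mp hψ w
    exact ⟨p, hp⟩
  obtain ⟨q, hq⟩ := hsurj (g v)
  refine ⟨q, LinearMap.ext fun w => ?_⟩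
  obtain ⟨p, rfl⟩ := hsurj w
  have hgp : Commute g (aeval f p) :=
    Algebra.commute_of_mem_adjoin_singleton_of_commute (aeval_mem_adjoin_singleton F f) hfg.symm
  calc g (aeval f p v) = aeval f p (g v) := LinearMap.congr_fun hgp v
    _ = aeval f q (aeval f p v) := by
      rw [← hq]
      exact LinearMap.congr_fun ((Commute.all p q).map (aeval f)).eq v

end Module.End

theorem Matrix.exists_eq_aeval_of_commute {F ι : Type*} [Field F] [Fintype ι] [DecidableEq ι]
    {A B : Matrix ι ι F} (hA : minpoly F A = A.charpoly) (hAB : Commute A B) :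
    ∃ q : F[X], B = aeval A q := by
  obtain ⟨q, hq⟩ := Module.End.exists_eq_aeval_of_commute (f := toLin' A) (g := toLin' B)
    (by rw [minpoly_toLin', hA, charpoly_natDegree_eq_dim, Module.finrank_fintype_fun_eq_card])
    (hAB.map toLinAlgEquiv')
  refine ⟨q, toLinAlgEquiv'.injective ?_⟩
  exact hq.trans (aeval_algHom_apply (toLinAlgEquiv' : Matrix ι ι F ≃ₐ[F] _).toAlgHom A q)

theorem Matrix.isCoprime_X_charpoly {F ι : Type*} [Field F] [Fintype ι] [DecidableEq ι]
    {A : Matrix ι ι F} (hA : IsUnit A) : IsCoprime X A.charpoly := by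
  rw [irreducible_X.coprime_iff_not_dvd, X_dvd_iff]
  intro h0
  have hdet := (Matrix.isUnit_iff_isUnit_det A).mp hA
  rw [det_eq_sign_charpoly_coeff, h0, mul_zero] at hdet
  exact not_isUnit_zero hdet

theorem statement10_general (F : Type*) [Field F] [Fintype F] (M : ℕ)
    (hcop : Nat.Coprime (Fintype.card F) M) (n : ℕ) (α : GL (Fin n) F)
    (hreg : minpoly F (α : Matrix (Fin n) (Fin n) F) =
      Matrix.charpoly (α : Matrix (Fin n) (Fin n) F)) :
    (∃ β : GL (Fin n) F, β ^ M = α) ↔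
      ∀ g : F[X], g.Monic → Irreducible g →
        g ∣ Matrix.charpoly (α : Matrix (Fin n) (Fin n) F) →
        ∃ h : F[X], Irreducible h ∧ h ∣ g.comp (X ^ M) ∧ h.natDegree = g.natDegree := by
  have hM := FiniteField.natCast_ne_zero_of_coprime_card hcop
  constructor
  · rintro ⟨β, hβ⟩ g - hg hgα
    replace hβ : (β : Matrix (Fin n) (Fin n) F) ^ M = α := by rw [← hβ, Units.val_pow_eq_pow_val]
    obtain ⟨q, hq⟩ := Matrix.exists_eq_aeval_of_commute hreg (hβ ▸ Commute.self_pow _ M).symm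
    refine exists_irreducible_dvd_comp_of_dvd_pow_sub_X (p := q) hg (hgα.trans ?_)
    rw [← hreg]
    exact minpoly.dvd F _ (by rw [map_sub, map_pow, aeval_X, ← hq, hβ, sub_self])
  · intro hα
    obtain ⟨p, hp⟩ := exists_dvd_pow_sub_X hM (Matrix.charpoly_monic _).ne_zero
      (Matrix.isCoprime_X_charpoly α.isUnit) fun g hgm hg hgα => by
        obtain ⟨h, hh, hhg, hdeg⟩ := hα g hgm hg hgα
        exact exists_dvd_pow_sub_X_of_irreducible_dvd_comp hg hh hhg hdeg
    refine Units.exists_pow_eq_of_pow_eq_val (b := aeval (α : Matrix (Fin n) (Fin n) F) p)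
      (by rintro rfl; simp at hM) ?_
    have := aeval_eq_zero_of_dvd_aeval_eq_zero hp (Matrix.aeval_self_charpoly _)
    rwa [map_sub, map_pow, aeval_X, sub_eq_zero] at this

/-- Let `gcd(q,M) = 1` and let `α ∈ GL(n, F_q)` be regular, i.e. its
minimal polynomial equals its characteristic polynomial.  Then `X^M = α` has a solution in
`GL(n, F_q)` iff every monic irreducible factor `g` of the characteristic polynomial of `α`
is an M-power polynomial, i.e. `g(X^M)` has an irreducible factor of degree `deg g`. -/
theorem statement10 (F : Type*) [Field F] [Fintype F] (M : ℕ) (hM : 2 ≤ M)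
    (hcop : Nat.Coprime (Fintype.card F) M) (n : ℕ) (α : GL (Fin n) F)
    (hreg : minpoly F (α : Matrix (Fin n) (Fin n) F) =
      Matrix.charpoly (α : Matrix (Fin n) (Fin n) F)) :
    (∃ β : GL (Fin n) F, β ^ M = α) ↔
      ∀ g : F[X], g.Monic → Irreducible g →
        g ∣ Matrix.charpoly (α : Matrix (Fin n) (Fin n) F) →
        ∃ h : F[X], Irreducible h ∧ h ∣ g.comp (X ^ M) ∧ h.natDegree = g.natDegree :=
  statement10_general F M hcop n α hreg
end
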